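/- Let g(z) = exp(iα)·φ_w(z) with α ∈ ℝ and w ∈ 𝔻 be a holomorphic automorphism of 𝔻. For every continuous compactly supported F : 𝔻 × 𝔻 → ℂ, every x ∈ 𝔻, every λ ∈ ℝ and every b on the unit circle, W_{F∘g}(x; λ, b) = W_F(g(x); λ, g(b)), where (F∘g)(x,y) := F(g(x), g(y)). -/

import Mathlib

open MeasureTheory

/-- The open unit disc in the complex plane. -/
def Disc : Set ℂ := {z : ℂ | ‖z‖ < 1}

/-- The geodesic symmetry `φ_a(z) = (a - z)/(1 - conj(a)·z)`. -/
noncomputable def phi (a z : ℂ) : ℂ := (a - z) / (1 - (starRingEnd ℂ) a * z)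

/-- The hyperbolic measure `dμ(z) = (1 - |z|²)⁻² dA(z)` on the unit disc. -/
noncomputable def hypMeasure : Measure ℂ :=
  (volume.restrict Disc).withDensity fun z => ENNReal.ofReal ((1 - ‖z‖ ^ 2)⁻¹ ^ 2)

/-- The plane wave `e_{λ,b}(z) = ((1 - |z|²)/|z - b|²)^{(1+iλ)/2}`. -/
noncomputable def pw (lam : ℝ) (b z : ℂ) : ℂ :=
  (((1 - ‖z‖ ^ 2) / ‖z - b‖ ^ 2 : ℝ) : ℂ) ^
    ((1 + Complex.I * (lam : ℂ)) / 2)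

/-- The geodesic symmetry at the point `x`:  `s_x(y) = φ_x(-φ_x(y))`. -/
noncomputable def geoSym (x y : ℂ) : ℂ := phi x (-(phi x y))

/-- The Wigner transform
`W_F(x;λ,b) = |e_{λ,b}(x)|⁻² ∫ e_{λ,b}(y)·e_{-λ,b}(s_x(y))·F(s_x(y),y)·J(x,y) dμ(y)`. -/
noncomputable def wigner (J : ℂ → ℂ → ℝ) (F : ℂ × ℂ → ℂ) (x : ℂ) (lam : ℝ) (b : ℂ) : ℂ :=
  ((‖pw lam b x‖ ^ 2 : ℝ) : ℂ)⁻¹ *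
    ∫ y, pw lam b y * pw (-lam) b (geoSym x y) * F (geoSym x y, y) * (J x y : ℂ) ∂hypMeasure

/-!
Every ingredient of the Wigner transform is natural under `g = e^{iα} φ_w`. The map `g`
preserves `μ` (its Jacobian `|g'|²` exactly compensates the density), commutes with the geodesic
symmetries, and, since geodesic midpoints are unique, commutes with `M`; as `J` is determined by
`M` and `μ`, this forces `J(g x, g y) = J(x, y)`. Finally `P(g z, g b) = c · P(z, b)` for the
Poisson kernel `P` with `c = |1 - w̄ b|² / (1 - |w|²)`, so after the substitution `y ↦ g y` the
integrand acquires the factor `c^{(1+iλ)/2} c^{(1-iλ)/2} = c`, which cancels against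
`|e_{λ,gb}(gx)|² = c · |e_{λ,b}(x)|²`.
-/

open Complex ComplexConjugate Set

section Mobius

variable {a e w z : ℂ}

lemma mem_disc_iff : z ∈ Disc ↔ ‖z‖ < 1 := Iff.rfl

lemma one_sub_normSq_pos (hz : z ∈ Disc) : 0 < 1 - normSq z := by
  rw [← Complex.sq_norm]; nlinarith [norm_nonneg z, mem_disc_iff.1 hz]

lemma normSq_one_sub_conj_mul_sub_normSq_sub (a z : ℂ) :
    normSq (1 - conj a * z) - normSq (a - z) = (1 - normSq a) * (1 - normSq z) := by
  simp only [normSq_apply, sub_re, sub_im, mul_re, mul_im, conj_re, conj_im, one_re, one_im]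
  ring

lemma one_sub_conj_mul_ne_zero (ha : a ∈ Disc) (hz : ‖z‖ ≤ 1) : 1 - conj a * z ≠ 0 := by
  rw [sub_ne_zero]
  intro h
  have : ‖conj a * z‖ < 1 := by
    rw [norm_mul, norm_conj]
    nlinarith [norm_nonneg a, norm_nonneg z, mem_disc_iff.1 ha]
  rw [← h, norm_one] at this
  exact lt_irrefl _ this

lemma one_sub_normSq_phi (h : 1 - conj a * z ≠ 0) :
    1 - normSq (phi a z) = (1 - normSq a) * (1 - normSq z) / normSq (1 - conj a * z) := by
  have h' : normSq (1 - conj a * z) ≠ 0 := normSq_eq_zero.not.2 h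
  rw [phi, normSq_div, ← normSq_one_sub_conj_mul_sub_normSq_sub, eq_div_iff h', sub_mul,
    div_mul_cancel₀ _ h', one_mul]

lemma phi_mem_disc (ha : a ∈ Disc) (hz : z ∈ Disc) : phi a z ∈ Disc := by
  have h := one_sub_normSq_phi (one_sub_conj_mul_ne_zero ha (mem_disc_iff.1 hz).le)
  have hpos : 0 < 1 - normSq (phi a z) := by
    rw [h]
    exact div_pos (mul_pos (one_sub_normSq_pos ha) (one_sub_normSq_pos hz))
      (normSq_pos.2 (one_sub_conj_mul_ne_zero ha (mem_disc_iff.1 hz).le))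
  rw [mem_disc_iff, ← sq_lt_one_iff₀ (norm_nonneg _), Complex.sq_norm]
  linarith

lemma conj_mul_self_of_norm_eq_one (he : ‖e‖ = 1) : conj e * e = 1 := by
  rw [← normSq_eq_conj_mul_self, ← Complex.sq_norm, he]; norm_num

lemma normSq_of_norm_eq_one (he : ‖e‖ = 1) : normSq e = 1 := by
  rw [← Complex.sq_norm, he, one_pow]

lemma mul_mem_disc (he : ‖e‖ = 1) (hw : w ∈ Disc) : e * w ∈ Disc := by
  rwa [mem_disc_iff, norm_mul, he, one_mul]

lemma phi_self (a : ℂ) : phi a a = 0 := by simp [phi]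

lemma phi_zero_left (z : ℂ) : phi 0 z = -z := by simp [phi]

lemma phi_phi (ha : a ∈ Disc) (hz : ‖z‖ ≤ 1) : phi a (phi a z) = z := by
  have h1 := one_sub_conj_mul_ne_zero ha hz
  have h1' : 1 - z * conj a ≠ 0 := by rwa [mul_comm]
  have h2 : 1 - conj a * a ≠ 0 := one_sub_conj_mul_ne_zero ha (mem_disc_iff.1 ha).le
  have h2' : 1 - a * conj a ≠ 0 := by rwa [mul_comm]
  have h3 : 1 - conj a * phi a z = (1 - conj a * a) / (1 - conj a * z) := by
    rw [phi]; field_simp; ring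
  rw [phi, h3, phi]
  field_simp
  ring

lemma phi_injOn_closedBall (ha : a ∈ Disc) : InjOn (phi a) (Metric.closedBall 0 1) := by
  refine LeftInvOn.injOn (f₁' := phi a) fun z hz => phi_phi ha ?_
  simpa using hz

lemma phi_mul_mul (he : ‖e‖ = 1) (a z : ℂ) : phi (e * a) (e * z) = e * phi a z := by
  have h : 1 - conj (e * a) * (e * z) = 1 - conj a * z := by
    rw [map_mul]; linear_combination (-(conj a) * z) * conj_mul_self_of_norm_eq_one he
  rw [phi, phi, h, ← mul_sub, mul_div_assoc]

lemma phi_sub_phi (hz : 1 - conj w * z ≠ 0) (ha : 1 - conj w * a ≠ 0) :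
    phi w z - phi w a = (1 - conj w * w) * (a - z) / ((1 - conj w * z) * (1 - conj w * a)) := by
  have hz' : 1 - z * conj w ≠ 0 := by rwa [mul_comm]
  rw [phi, phi]; field_simp; ring

/-- `φ_{φ_w(a)} ∘ φ_w = u · φ_a` with `|u| = 1`. -/
lemma phi_phi_phi (hw : w ∈ Disc) (ha : a ∈ Disc) (hz : z ∈ Disc) :
    phi (phi w a) (phi w z) = -((1 - conj a * w) / (1 - conj w * a)) * phi a z := by
  have h1 := one_sub_conj_mul_ne_zero hw (mem_disc_iff.1 ha).le
  have h2 := one_sub_conj_mul_ne_zero hw (mem_disc_iff.1 hz).le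
  have h1' : 1 - conj a * w ≠ 0 := by
    simpa [mul_comm] using (map_ne_zero (starRingEnd ℂ)).2 h1
  have hw' : 1 - conj w * w ≠ 0 := one_sub_conj_mul_ne_zero hw (mem_disc_iff.1 hw).le
  have hden : 1 - conj (phi w a) * phi w z
      = (1 - conj w * w) * (1 - conj a * z) / ((1 - conj a * w) * (1 - conj w * z)) := by
    simp only [phi, map_div₀, map_sub, map_mul, map_one, conj_conj]
    field_simp
    ring
  rw [phi, phi_sub_phi h1 h2, hden, phi]
  field_simp
  ring

end Mobius

noncomputable def discAut (e w z : ℂ) : ℂ := e * phi w z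

section DiscAut

variable {a e w x y z : ℂ}

lemma discAut_mem_disc (he : ‖e‖ = 1) (hw : w ∈ Disc) (hz : z ∈ Disc) : discAut e w z ∈ Disc := by
  rw [mem_disc_iff, discAut, norm_mul, he, one_mul]
  exact phi_mem_disc hw hz

lemma one_sub_norm_discAut_sq (he : ‖e‖ = 1) (hz : 1 - conj w * z ≠ 0) :
    1 - ‖discAut e w z‖ ^ 2 = (1 - normSq w) * (1 - normSq z) / normSq (1 - conj w * z) := by
  rw [discAut, Complex.sq_norm, normSq_mul, normSq_of_norm_eq_one he, one_mul,
    one_sub_normSq_phi hz]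

lemma discAut_discAut (he : ‖e‖ = 1) (hw : w ∈ Disc) (hz : ‖z‖ ≤ 1) :
    discAut (conj e) (e * w) (discAut e w z) = z := by
  rw [discAut, discAut, phi_mul_mul he, phi_phi hw hz, ← mul_assoc,
    conj_mul_self_of_norm_eq_one he, one_mul]

lemma discAut_discAut' (he : ‖e‖ = 1) (hw : w ∈ Disc) (hz : ‖z‖ ≤ 1) :
    discAut e w (discAut (conj e) (e * w) z) = z := by
  simpa [← mul_assoc, mul_comm e (conj e), conj_mul_self_of_norm_eq_one he]
    using discAut_discAut ((norm_conj e).trans he) (mul_mem_disc he hw) hz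

lemma discAut_image_disc (he : ‖e‖ = 1) (hw : w ∈ Disc) : discAut e w '' Disc = Disc := by
  refine Subset.antisymm (image_subset_iff.2 fun z hz => discAut_mem_disc he hw hz) fun z hz => ?_
  exact ⟨_, discAut_mem_disc ((norm_conj e).trans he) (mul_mem_disc he hw) hz,
    discAut_discAut' he hw (mem_disc_iff.1 hz).le⟩

lemma discAut_injOn (he : ‖e‖ = 1) (hw : w ∈ Disc) : InjOn (discAut e w) Disc :=
  LeftInvOn.injOn (f₁' := discAut (conj e) (e * w)) fun _ hz =>
    discAut_discAut he hw (mem_disc_iff.1 hz).le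

lemma hasDerivAt_discAut (hz : 1 - conj w * z ≠ 0) :
    HasDerivAt (discAut e w) (e * ((conj w * w - 1) / (1 - conj w * z) ^ 2)) z := by
  have hphi : HasDerivAt (phi w)
      (((-1) * (1 - conj w * z) - (w - z) * (-conj w)) / (1 - conj w * z) ^ 2) z := by
    refine ((hasDerivAt_id z).const_sub w).div ?_ hz
    simpa using ((hasDerivAt_id z).const_mul (conj w)).const_sub 1
  refine (hphi.const_mul e).congr_deriv ?_
  ring

lemma phi_discAut_discAut (he : ‖e‖ = 1) (hw : w ∈ Disc) (ha : a ∈ Disc) (hz : z ∈ Disc) :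
    phi (discAut e w a) (discAut e w z) = e * -((1 - conj a * w) / (1 - conj w * a)) * phi a z := by
  rw [discAut, discAut, phi_mul_mul he, phi_phi_phi hw ha hz, mul_assoc]

lemma phi_geoSym (hx : x ∈ Disc) (hy : y ∈ Disc) : phi x (geoSym x y) = -phi x y := by
  rw [geoSym, phi_phi hx (by rw [norm_neg]; exact (mem_disc_iff.1 (phi_mem_disc hx hy)).le)]

lemma geoSym_mem_disc (hx : x ∈ Disc) (hy : y ∈ Disc) : geoSym x y ∈ Disc := by
  refine phi_mem_disc hx ?_
  rw [mem_disc_iff, norm_neg]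
  exact phi_mem_disc hx hy

lemma geoSym_discAut (he : ‖e‖ = 1) (hw : w ∈ Disc) (hx : x ∈ Disc) (hy : y ∈ Disc) :
    geoSym (discAut e w x) (discAut e w y) = discAut e w (geoSym x y) := by
  have hgx := discAut_mem_disc he hw hx
  have hgy := discAut_mem_disc he hw hy
  have hs := geoSym_mem_disc hx hy
  refine phi_injOn_closedBall hgx ?_ ?_ ?_
  · simpa using (mem_disc_iff.1 (geoSym_mem_disc hgx hgy)).le
  · simpa using (mem_disc_iff.1 (discAut_mem_disc he hw hs)).le
  rw [phi_geoSym hgx hgy, phi_discAut_discAut he hw hx hy, phi_discAut_discAut he hw hx hs,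
    phi_geoSym hx hy]
  ring

end DiscAut

def IsGeodesicMidpoint (m x y : ℂ) : Prop := phi m x = -phi m y

section Midpoint

variable {e w m m' x y : ℂ}

lemma IsGeodesicMidpoint.map_discAut (he : ‖e‖ = 1) (hw : w ∈ Disc) (hm : m ∈ Disc) (hx : x ∈ Disc)
    (hy : y ∈ Disc) (h : IsGeodesicMidpoint m x y) :
    IsGeodesicMidpoint (discAut e w m) (discAut e w x) (discAut e w y) := by
  rw [IsGeodesicMidpoint, phi_discAut_discAut he hw hm hx, phi_discAut_discAut he hw hm hy, h]
  ring

lemma eq_zero_of_isGeodesicMidpoint_neg (hx : x ∈ Disc) (hm : m ∈ Disc)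
    (h : IsGeodesicMidpoint m x (-x)) : m = 0 := by
  have d1 := one_sub_conj_mul_ne_zero hm (mem_disc_iff.1 hx).le
  have d2 : 1 + conj m * x ≠ 0 := by
    simpa using one_sub_conj_mul_ne_zero hm (z := -x) (by simpa using (mem_disc_iff.1 hx).le)
  have hmx : m = conj m * x ^ 2 := by
    have d1' : 1 - x * conj m ≠ 0 := by rwa [mul_comm]
    have d2' : 1 + x * conj m ≠ 0 := by rwa [mul_comm]
    rw [IsGeodesicMidpoint, phi, phi] at h
    simp only [mul_neg, sub_neg_eq_add] at h
    field_simp at h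
    linear_combination h / 2
  have hnorm : ‖m‖ * (1 - ‖x‖ ^ 2) = 0 := by
    have := congrArg norm hmx
    rw [norm_mul, norm_conj, norm_pow] at this
    linear_combination this
  have hx2 : 1 - ‖x‖ ^ 2 ≠ 0 := by nlinarith [norm_nonneg x, mem_disc_iff.1 hx]
  simpa [hx2] using hnorm

/-- Move `m` to `0` by `φ_m`: a midpoint of `x` and `-x` must be `0`. -/
lemma IsGeodesicMidpoint.eq (hx : x ∈ Disc) (hy : y ∈ Disc) (hm : m ∈ Disc) (hm' : m' ∈ Disc)
    (h : IsGeodesicMidpoint m x y) (h' : IsGeodesicMidpoint m' x y) : m' = m := by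
  have h1 : ‖(1 : ℂ)‖ = 1 := norm_one
  have h0 := h.map_discAut h1 hm hm hx hy
  have h0' := h'.map_discAut h1 hm hm' hx hy
  rw [discAut, phi_self, mul_zero, IsGeodesicMidpoint, phi_zero_left, phi_zero_left,
    neg_inj] at h0
  rw [show discAut 1 m y = -discAut 1 m x by rw [h0, neg_neg]] at h0'
  refine discAut_injOn h1 hm hm' hm ?_
  rw [eq_zero_of_isGeodesicMidpoint_neg (discAut_mem_disc h1 hm hx)
    (discAut_mem_disc h1 hm hm') h0', discAut, phi_self, mul_zero]

lemma geodesicMidpoint_discAut (M : ℂ → ℂ → ℂ)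
    (hM : ∀ x ∈ Disc, ∀ y ∈ Disc, M x y ∈ Disc ∧ IsGeodesicMidpoint (M x y) x y)
    (he : ‖e‖ = 1) (hw : w ∈ Disc) (hx : x ∈ Disc) (hy : y ∈ Disc) :
    M (discAut e w x) (discAut e w y) = discAut e w (M x y) := by
  have hgx := discAut_mem_disc he hw hx
  have hgy := discAut_mem_disc he hw hy
  obtain ⟨hmD, hmid⟩ := hM x hx y hy
  obtain ⟨hgmD, hgmid⟩ := hM _ hgx _ hgy
  exact (hmid.map_discAut he hw hmD hx hy).eq hgx hgy (discAut_mem_disc he hw hmD) hgmD hgmid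

end Midpoint

noncomputable def discPoisson (b z : ℂ) : ℝ := (1 - ‖z‖ ^ 2) / ‖z - b‖ ^ 2

section PlaneWave

variable {b e w z z' : ℂ}

lemma pw_eq_discPoisson_cpow (lam : ℝ) (b z : ℂ) :
    pw lam b z = (discPoisson b z : ℂ) ^ ((1 + I * lam) / 2) := rfl

lemma discPoisson_nonneg (hz : ‖z‖ ≤ 1) : 0 ≤ discPoisson b z := by
  unfold discPoisson
  have : 0 ≤ 1 - ‖z‖ ^ 2 := by nlinarith [norm_nonneg z]
  positivity

lemma normSq_one_sub_conj_mul_div_pos (hw : w ∈ Disc) (hb : ‖b‖ ≤ 1) :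
    0 < normSq (1 - conj w * b) / (1 - normSq w) :=
  div_pos (normSq_pos.2 (one_sub_conj_mul_ne_zero hw hb)) (one_sub_normSq_pos hw)

/-- `P(g z, g b) = P(z, b) / |g'(b)|` for `g = discAut e w`. -/
lemma discPoisson_discAut (he : ‖e‖ = 1) (hw : w ∈ Disc) (hz : 1 - conj w * z ≠ 0)
    (hb : 1 - conj w * b ≠ 0) :
    discPoisson (discAut e w b) (discAut e w z)
      = discPoisson b z * (normSq (1 - conj w * b) / (1 - normSq w)) := by
  have hW : 1 - normSq w ≠ 0 := (one_sub_normSq_pos hw).ne'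
  have hZ : normSq (1 - conj w * z) ≠ 0 := normSq_eq_zero.not.2 hz
  have hden : ‖discAut e w z - discAut e w b‖ ^ 2
      = (1 - normSq w) ^ 2 * normSq (z - b)
        / (normSq (1 - conj w * z) * normSq (1 - conj w * b)) := by
    have hww : (1 : ℂ) - conj w * w = ((1 - normSq w : ℝ) : ℂ) := by
      rw [ofReal_sub, ofReal_one, normSq_eq_conj_mul_self]
    rw [discAut, discAut, ← mul_sub, Complex.sq_norm, normSq_mul, normSq_of_norm_eq_one he,
      one_mul, phi_sub_phi hz hb, normSq_div, normSq_mul, normSq_mul, hww, normSq_ofReal,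
      ← normSq_neg (b - z), neg_sub]
    ring
  rw [discPoisson, discPoisson, one_sub_norm_discAut_sq he hz, hden, Complex.sq_norm z,
    Complex.sq_norm (z - b)]
  field_simp

lemma norm_pw_sq (lam : ℝ) (hz : ‖z‖ ≤ 1) : ‖pw lam b z‖ ^ 2 = discPoisson b z := by
  rw [pw_eq_discPoisson_cpow,
    norm_cpow_eq_rpow_re_of_nonneg (discPoisson_nonneg hz) (by simp),
    ← Real.rpow_natCast, ← Real.rpow_mul (discPoisson_nonneg hz)]
  simp

/-- The factors `c^{(1+iλ)/2}` and `c^{(1-iλ)/2}` by which `e_{λ,b}` and `e_{-λ,b}` transform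
multiply to `c`. -/
lemma pw_mul_pw_neg_discAut (lam : ℝ) (he : ‖e‖ = 1) (hw : w ∈ Disc) (hb : ‖b‖ ≤ 1)
    (hz : ‖z‖ ≤ 1) (hz' : ‖z'‖ ≤ 1) :
    pw lam (discAut e w b) (discAut e w z) * pw (-lam) (discAut e w b) (discAut e w z')
      = ((normSq (1 - conj w * b) / (1 - normSq w) : ℝ) : ℂ)
          * (pw lam b z * pw (-lam) b z') := by
  have hb' := one_sub_conj_mul_ne_zero hw hb
  have hc := normSq_one_sub_conj_mul_div_pos hw hb
  rw [pw_eq_discPoisson_cpow, pw_eq_discPoisson_cpow,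
    discPoisson_discAut he hw (one_sub_conj_mul_ne_zero hw hz) hb',
    discPoisson_discAut he hw (one_sub_conj_mul_ne_zero hw hz') hb', ofReal_mul, ofReal_mul,
    mul_cpow_ofReal_nonneg (discPoisson_nonneg hz) hc.le,
    mul_cpow_ofReal_nonneg (discPoisson_nonneg hz') hc.le]
  set c : ℂ := ((normSq (1 - conj w * b) / (1 - normSq w) : ℝ) : ℂ)
  have hcc : c ^ ((1 + I * lam) / 2) * c ^ ((1 + I * ((-lam : ℝ) : ℂ)) / 2) = c := by
    rw [← cpow_add _ _ (ofReal_ne_zero.2 hc.ne'),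
      show (1 + I * lam) / 2 + (1 + I * ((-lam : ℝ) : ℂ)) / 2 = 1 by push_cast; ring, cpow_one]
  rw [mul_mul_mul_comm, hcc, mul_comm]
  rfl

end PlaneWave

noncomputable def hypDensity (z : ℂ) : ℝ := (1 - ‖z‖ ^ 2)⁻¹ ^ 2

section HypMeasure

variable {E : Type*} [NormedAddCommGroup E] [NormedSpace ℝ E] {e w z : ℂ}

lemma disc_eq_ball : Disc = Metric.ball 0 1 := by
  ext z; simp [Disc]

lemma isOpen_disc : IsOpen Disc := disc_eq_ball ▸ Metric.isOpen_ball

lemma measurableSet_disc : MeasurableSet Disc := isOpen_disc.measurableSet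

lemma integral_hypMeasure (h : ℂ → E) :
    ∫ z, h z ∂hypMeasure = ∫ z in Disc, hypDensity z • h z := by
  rw [hypMeasure, integral_withDensity_eq_integral_toReal_smul (by fun_prop)
    (ae_of_all _ fun _ => ENNReal.ofReal_lt_top)]
  simp_rw [ENNReal.toReal_ofReal (sq_nonneg _)]
  rfl

lemma ae_mem_disc_hypMeasure : ∀ᵐ z ∂hypMeasure, z ∈ Disc :=
  (withDensity_absolutelyContinuous _ _).ae_le (ae_restrict_mem measurableSet_disc)

/-- The real Jacobian of a holomorphic map is `|f'|²`. -/
lemma integral_image_eq_integral_normSq_deriv_smul {s : Set ℂ} {f f' : ℂ → ℂ}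
    (hs : MeasurableSet s) (hf : ∀ z ∈ s, HasDerivAt f (f' z) z) (hinj : InjOn f s)
    (g : ℂ → E) : ∫ z in f '' s, g z = ∫ z in s, normSq (f' z) • g (f z) := by
  rw [integral_image_eq_integral_abs_det_fderiv_smul volume hs
    (fun z hz => ((hf z hz).hasFDerivAt.restrictScalars ℝ).hasFDerivWithinAt) hinj]
  refine setIntegral_congr_fun hs fun z _ => ?_
  simp [ContinuousLinearMap.det, LinearMap.det_restrictScalars, Algebra.norm_complex_eq,
    abs_of_nonneg (normSq_nonneg _)]

lemma normSq_deriv_discAut_mul_hypDensity (he : ‖e‖ = 1) (hw : w ∈ Disc) (hz : z ∈ Disc) :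
    normSq (e * ((conj w * w - 1) / (1 - conj w * z) ^ 2)) * hypDensity (discAut e w z)
      = hypDensity z := by
  have hd := one_sub_conj_mul_ne_zero hw (mem_disc_iff.1 hz).le
  have hD : normSq (1 - conj w * z) ≠ 0 := normSq_eq_zero.not.2 hd
  have hW : 1 - normSq w ≠ 0 := (one_sub_normSq_pos hw).ne'
  have hww : conj w * w - 1 = -((1 - normSq w : ℝ) : ℂ) := by
    rw [ofReal_sub, ofReal_one, normSq_eq_conj_mul_self]; ring
  rw [hypDensity, hypDensity, one_sub_norm_discAut_sq he hd, normSq_mul,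
    normSq_of_norm_eq_one he, hww, normSq_div, normSq_neg, normSq_ofReal, map_pow,
    Complex.sq_norm]
  field_simp

lemma integral_comp_discAut (he : ‖e‖ = 1) (hw : w ∈ Disc) (h : ℂ → E) :
    ∫ z, h (discAut e w z) ∂hypMeasure = ∫ z, h z ∂hypMeasure := by
  rw [integral_hypMeasure (fun z => h (discAut e w z)), integral_hypMeasure h]
  conv_rhs => rw [← discAut_image_disc he hw]
  rw [integral_image_eq_integral_normSq_deriv_smul measurableSet_disc
    (fun z hz => hasDerivAt_discAut (one_sub_conj_mul_ne_zero hw (mem_disc_iff.1 hz).le))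
    (discAut_injOn he hw)]
  refine setIntegral_congr_fun measurableSet_disc fun z hz => ?_
  rw [smul_smul, normSq_deriv_discAut_mul_hypDensity he hw hz]

end HypMeasure

section TestFunctions

lemma integrableOn_mul_of_tsupport_subset {X R : Type*} [TopologicalSpace X] [T2Space X]
    [MeasurableSpace X] [OpensMeasurableSpace X] [NormedRing R] {μ : Measure X}
    [IsFiniteMeasureOnCompacts μ] {U : Set X} {f D : X → R} (hU : MeasurableSet U)
    (hf : Continuous f) (hfc : HasCompactSupport f) (hfU : tsupport f ⊆ U)
    (hD : ContinuousOn D U) : IntegrableOn (fun x => f x * D x) U μ :=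
  ((hf.continuousOn.mul (hD.mono hfU)).integrableOn_compact hfc).of_forall_sdiff_eq_zero hU
    fun x hx => by simp [image_eq_zero_of_notMem_tsupport hx.2]

lemma continuousOn_hypDensity : ContinuousOn hypDensity Disc := by
  refine (ContinuousOn.inv₀ (by fun_prop) fun z hz => ?_).pow 2
  nlinarith [norm_nonneg z, mem_disc_iff.1 hz]

lemma hypDensity_pos {z : ℂ} (hz : z ∈ Disc) : 0 < hypDensity z := by
  have : 0 < 1 - ‖z‖ ^ 2 := by nlinarith [norm_nonneg z, mem_disc_iff.1 hz]
  unfold hypDensity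
  positivity

/-- `hypDensity • (K₁ - K₂)` vanishes as a distribution on `Disc`, hence almost everywhere,
hence everywhere on `Disc` by continuity. -/
lemma eqOn_disc_of_integral_mul_eq {K₁ K₂ : ℂ → ℝ} (h₁ : ContinuousOn K₁ Disc)
    (h₂ : ContinuousOn K₂ Disc)
    (h : ∀ f : ℂ → ℂ, Continuous f → HasCompactSupport f → tsupport f ⊆ Disc →
      ∫ z, f z * (K₁ z : ℂ) ∂hypMeasure = ∫ z, f z * (K₂ z : ℂ) ∂hypMeasure) :
    EqOn K₁ K₂ Disc := by
  have hK : ∀ {K : ℂ → ℝ}, ContinuousOn K Disc →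
      ContinuousOn (fun z => ((hypDensity z * K z : ℝ) : ℂ)) Disc := fun hK =>
    continuous_ofReal.comp_continuousOn (continuousOn_hypDensity.mul hK)
  set D : ℂ → ℂ := fun z => ((hypDensity z * K₁ z : ℝ) : ℂ) - ((hypDensity z * K₂ z : ℝ) : ℂ)
  have hD : ContinuousOn D Disc := (hK h₁).sub (hK h₂)
  have hvanish : ∀ᵐ z, z ∈ Disc → D z = 0 := by
    refine isOpen_disc.ae_eq_zero_of_integral_contDiff_smul_eq_zero
      (hD.locallyIntegrableOn measurableSet_disc) fun g hg hgc hgD => ?_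
    set f : ℂ → ℂ := fun z => (g z : ℂ)
    have hf : Continuous f := continuous_ofReal.comp hg.continuous
    have hfD : tsupport f ⊆ Disc := (tsupport_comp_subset ofReal_zero g).trans hgD
    have hfc : HasCompactSupport f := hgc.comp_left ofReal_zero
    have key := h f hf hfc hfD
    rw [integral_hypMeasure, integral_hypMeasure] at key
    have hweight : ∀ K : ℂ → ℝ, ∀ z,
        hypDensity z • (f z * (K z : ℂ)) = f z * ((hypDensity z * K z : ℝ) : ℂ) := by
      intro K z; simp only [Complex.real_smul, ofReal_mul]; ring
    simp only [hweight] at key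
    rw [← setIntegral_eq_integral_of_forall_compl_eq_zero fun z hz => by
        simp [image_eq_zero_of_notMem_tsupport (fun h => hz (hgD h))]]
    simp only [D, smul_sub, Complex.real_smul]
    rw [integral_sub (integrableOn_mul_of_tsupport_subset measurableSet_disc hf hfc hfD (hK h₁))
      (integrableOn_mul_of_tsupport_subset measurableSet_disc hf hfc hfD (hK h₂)), key, sub_self]
  have hDzero : EqOn D 0 Disc := Measure.eqOn_open_of_ae_eq
    ((ae_restrict_iff' measurableSet_disc).2 hvanish) isOpen_disc hD continuousOn_const
  intro z hz
  have := hDzero hz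
  simp only [D, Pi.zero_apply, sub_eq_zero, ofReal_inj] at this
  exact mul_left_cancel₀ (hypDensity_pos hz).ne' this

/-- `f ∘ discAut e w` itself need not be continuous: at the pole of `φ_w` it takes the junk
value `f 0`. -/
lemma exists_eqOn_comp_discAut {e w : ℂ} (he : ‖e‖ = 1) (hw : w ∈ Disc) {f : ℂ → ℂ}
    (hf : Continuous f) (hfc : HasCompactSupport f) (hfD : tsupport f ⊆ Disc) :
    ∃ f' : ℂ → ℂ, Continuous f' ∧ HasCompactSupport f' ∧ tsupport f' ⊆ Disc ∧
      EqOn f' (f ∘ discAut e w) Disc := by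
  have he' : ‖conj e‖ = 1 := (norm_conj e).trans he
  have hw' : e * w ∈ Disc := mul_mem_disc he hw
  set K := discAut (conj e) (e * w) '' tsupport f
  have hK : IsCompact K := hfc.image_of_continuousOn fun u hu =>
    (hasDerivAt_discAut (one_sub_conj_mul_ne_zero hw' (hfD hu).le)).continuousAt.continuousWithinAt
  have hKD : K ⊆ Disc := image_subset_iff.2 fun u hu => discAut_mem_disc he' hw' (hfD hu)
  set f' := Disc.indicator (f ∘ discAut e w)
  have hsupp : tsupport f' ⊆ K := by
    refine closure_minimal (fun z hz => ?_) hK.isClosed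
    rw [Function.mem_support, indicator_apply_ne_zero] at hz
    exact ⟨discAut e w z, subset_tsupport _ hz.2, discAut_discAut he hw (mem_disc_iff.1 hz.1).le⟩
  have hcont : ContinuousOn f' Disc := by
    refine ContinuousOn.congr (fun z hz => ?_) fun z hz => indicator_of_mem hz _
    exact (hf.continuousAt.comp (hasDerivAt_discAut
      (one_sub_conj_mul_ne_zero hw (mem_disc_iff.1 hz).le)).continuousAt).continuousWithinAt
  exact ⟨f', continuous_of_tsupport fun z hz =>
      hcont.continuousAt (isOpen_disc.mem_nhds (hKD (hsupp hz))),
    hK.of_isClosed_subset (isClosed_tsupport _) hsupp, hsupp.trans hKD,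
    fun z hz => indicator_of_mem hz _⟩

end TestFunctions

section Invariance

variable {e w x y : ℂ}

/-- `J(·, g y)` and `J(g⁻¹ ·, y)` have the same integrals against test functions, by the
invariance of `μ` and the equivariance of `M`. -/
lemma jacobian_discAut (M : ℂ → ℂ → ℂ)
    (hM : ∀ x ∈ Disc, ∀ y ∈ Disc, M x y ∈ Disc ∧ IsGeodesicMidpoint (M x y) x y)
    (J : ℂ → ℂ → ℝ) (hJc : Continuous fun p : ℂ × ℂ => J p.1 p.2)
    (hJ : ∀ y ∈ Disc, ∀ f : ℂ → ℂ, Continuous f → HasCompactSupport f → tsupport f ⊆ Disc →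
      ∫ z, f (M z y) ∂hypMeasure = ∫ x, f x * (J x y : ℂ) ∂hypMeasure)
    (he : ‖e‖ = 1) (hw : w ∈ Disc) (hx : x ∈ Disc) (hy : y ∈ Disc) :
    J (discAut e w x) (discAut e w y) = J x y := by
  have he' : ‖conj e‖ = 1 := (norm_conj e).trans he
  have hw' : e * w ∈ Disc := mul_mem_disc he hw
  set g := discAut e w
  set g' := discAut (conj e) (e * w)
  have hgy : g y ∈ Disc := discAut_mem_disc he hw hy
  have hK₁ : ContinuousOn (fun ξ => J ξ (g y)) Disc :=
    (hJc.comp (continuous_id.prodMk continuous_const)).continuousOn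
  have hK₂ : ContinuousOn (fun ξ => J (g' ξ) y) Disc := fun ξ hξ =>
    (hJc.continuousAt.comp ((hasDerivAt_discAut (one_sub_conj_mul_ne_zero hw'
      (mem_disc_iff.1 hξ).le)).continuousAt.prodMk continuousAt_const)).continuousWithinAt
  have hg'g : ∀ᵐ ξ ∂hypMeasure, g' (g ξ) = ξ := by
    filter_upwards [ae_mem_disc_hypMeasure] with ξ hξ
    exact discAut_discAut he hw (mem_disc_iff.1 hξ).le
  suffices key : EqOn (fun ξ => J ξ (g y)) (fun ξ => J (g' ξ) y) Disc from
    (key (discAut_mem_disc he hw hx)).trans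
      (congrArg (J · y) (discAut_discAut he hw (mem_disc_iff.1 hx).le))
  refine eqOn_disc_of_integral_mul_eq hK₁ hK₂ fun f hf hfc hfD => ?_
  obtain ⟨f', hf', hf'c, hf'D, hf'f⟩ := exists_eqOn_comp_discAut he hw hf hfc hfD
  calc ∫ ξ, f ξ * (J ξ (g y) : ℂ) ∂hypMeasure
      = ∫ z, f (M (g z) (g y)) ∂hypMeasure := by
        rw [← hJ _ hgy f hf hfc hfD, integral_comp_discAut he hw fun z => f (M z (g y))]
    _ = ∫ z, f' (M z y) ∂hypMeasure := by
        refine integral_congr_ae ?_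
        filter_upwards [ae_mem_disc_hypMeasure] with z hz
        rw [geodesicMidpoint_discAut M hM he hw hz hy, hf'f (hM z hz y hy).1, Function.comp_apply]
    _ = ∫ ξ, f (g ξ) * (J (g' (g ξ)) y : ℂ) ∂hypMeasure := by
        rw [hJ y hy f' hf' hf'c hf'D]
        refine integral_congr_ae ?_
        filter_upwards [ae_mem_disc_hypMeasure, hg'g] with ξ hξ hξ'
        rw [hξ', hf'f hξ, Function.comp_apply]
    _ = ∫ ξ, f ξ * (J (g' ξ) y : ℂ) ∂hypMeasure :=
        integral_comp_discAut he hw fun ξ => f ξ * (J (g' ξ) y : ℂ)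

lemma integral_wigner_discAut (M : ℂ → ℂ → ℂ)
    (hM : ∀ x ∈ Disc, ∀ y ∈ Disc, M x y ∈ Disc ∧ IsGeodesicMidpoint (M x y) x y)
    (J : ℂ → ℂ → ℝ) (hJc : Continuous fun p : ℂ × ℂ => J p.1 p.2)
    (hJ : ∀ y ∈ Disc, ∀ f : ℂ → ℂ, Continuous f → HasCompactSupport f → tsupport f ⊆ Disc →
      ∫ z, f (M z y) ∂hypMeasure = ∫ x, f x * (J x y : ℂ) ∂hypMeasure)
    (F : ℂ × ℂ → ℂ) (lam : ℝ) {b : ℂ} (he : ‖e‖ = 1) (hw : w ∈ Disc) (hx : x ∈ Disc)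
    (hb : ‖b‖ ≤ 1) :
    ∫ y, pw lam (discAut e w b) y * pw (-lam) (discAut e w b) (geoSym (discAut e w x) y)
        * F (geoSym (discAut e w x) y, y) * (J (discAut e w x) y : ℂ) ∂hypMeasure
      = ((normSq (1 - conj w * b) / (1 - normSq w) : ℝ) : ℂ)
        * ∫ y, pw lam b y * pw (-lam) b (geoSym x y)
          * F (discAut e w (geoSym x y), discAut e w y) * (J x y : ℂ) ∂hypMeasure := by
  rw [← integral_const_mul, ← integral_comp_discAut he hw]
  refine integral_congr_ae ?_
  filter_upwards [ae_mem_disc_hypMeasure] with y hy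
  have hs := geoSym_mem_disc hx hy
  rw [geoSym_discAut he hw hx hy, pw_mul_pw_neg_discAut lam he hw hb (mem_disc_iff.1 hy).le
    (mem_disc_iff.1 hs).le, jacobian_discAut M hM J hJc hJ he hw hx hy]
  ring

end Invariance

theorem stmt1_general (M : ℂ → ℂ → ℂ)
    (hM : ∀ x ∈ Disc, ∀ y ∈ Disc, M x y ∈ Disc ∧ phi (M x y) x = -(phi (M x y) y))
    (J : ℂ → ℂ → ℝ)
    (hJc : Continuous fun p : ℂ × ℂ => J p.1 p.2)
    (hJ : ∀ y ∈ Disc, ∀ f : ℂ → ℂ, Continuous f → HasCompactSupport f → tsupport f ⊆ Disc →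
      ∫ z, f (M z y) ∂hypMeasure = ∫ x, f x * (J x y : ℂ) ∂hypMeasure)
    (F : ℂ × ℂ → ℂ)
    (α : ℝ) (w : ℂ) (hw : w ∈ Disc) (x : ℂ) (hx : x ∈ Disc) (lam : ℝ)
    (b : ℂ) (hb : ‖b‖ = 1) :
    wigner J
        (fun p => F (Complex.exp (Complex.I * α) * phi w p.1,
                     Complex.exp (Complex.I * α) * phi w p.2)) x lam b
      = wigner J F (Complex.exp (Complex.I * α) * phi w x) lam
          (Complex.exp (Complex.I * α) * phi w b) := by
  set e := Complex.exp (Complex.I * α)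
  have he : ‖e‖ = 1 := by simp [e]
  have hc := (normSq_one_sub_conj_mul_div_pos hw hb.le).ne'
  have hnorm : ‖pw lam (discAut e w b) (discAut e w x)‖ ^ 2
      = ‖pw lam b x‖ ^ 2 * (normSq (1 - conj w * b) / (1 - normSq w)) := by
    rw [norm_pw_sq lam (mem_disc_iff.1 (discAut_mem_disc he hw hx)).le,
      norm_pw_sq lam (mem_disc_iff.1 hx).le, discPoisson_discAut he hw
        (one_sub_conj_mul_ne_zero hw (mem_disc_iff.1 hx).le)
        (one_sub_conj_mul_ne_zero hw hb.le)]
  change _ = wigner J F (discAut e w x) lam (discAut e w b)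
  rw [wigner, wigner, hnorm, integral_wigner_discAut M hM J hJc hJ F lam he hw hx hb.le,
    ofReal_mul, mul_inv, mul_assoc, inv_mul_cancel_left₀ (ofReal_ne_zero.2 hc)]
  rfl

/-- Invariance of the Wigner transform: for every holomorphic automorphism
`g = e^{iα}·φ_w` of the disc, `W_{F∘g}(x; λ, b) = W_F(g(x); λ, g(b))`. -/
theorem stmt1 (M : ℂ → ℂ → ℂ)
    (hM : ∀ x ∈ Disc, ∀ y ∈ Disc, M x y ∈ Disc ∧ phi (M x y) x = -(phi (M x y) y))
    (J : ℂ → ℂ → ℝ)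
    (hJc : Continuous fun p : ℂ × ℂ => J p.1 p.2)
    (hJ0 : ∀ x y, 0 ≤ J x y)
    (hJ : ∀ y ∈ Disc, ∀ f : ℂ → ℂ, Continuous f → HasCompactSupport f → tsupport f ⊆ Disc →
      ∫ z, f (M z y) ∂hypMeasure = ∫ x, f x * (J x y : ℂ) ∂hypMeasure)
    (F : ℂ × ℂ → ℂ) (hFc : Continuous F) (hFcs : HasCompactSupport F)
    (hFsupp : tsupport F ⊆ Disc ×ˢ Disc)
    (α : ℝ) (w : ℂ) (hw : w ∈ Disc) (x : ℂ) (hx : x ∈ Disc) (lam : ℝ)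
    (b : ℂ) (hb : ‖b‖ = 1) :
    wigner J
        (fun p => F (Complex.exp (Complex.I * α) * phi w p.1,
                     Complex.exp (Complex.I * α) * phi w p.2)) x lam b
      = wigner J F (Complex.exp (Complex.I * α) * phi w x) lam
          (Complex.exp (Complex.I * α) * phi w b) :=
  stmt1_general M hM J hJc hJ F α w hw x hx lam b hb
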